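/- arXiv:2311.03843 — 8 statements merged into one kernel-verified Lean document; each statement's English description precedes it below -/
import Mathlib

section
/- Let P be a finite nonempty set of points in ℝ³ and let (c, r) be its smallest enclosing ball (‖p − c‖ ≤ r for all p ∈ P, with r minimal). Then the center c lies in the convex hull of the support points, i.e., c ∈ convexHull ℝ {p ∈ P : ‖p − c‖ = r}. -/
/-!
If `c` were outside the convex hull of the support points, some direction `v` would make an
acute angle with `p - c` for every support point `p`. Moving the center a little along `v`
then strictly decreases the distance to every support point, while the other points stay
strictly inside the ball by continuity; since `P` is finite, a strictly smaller radius
would then suffice, contradicting minimality.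
-/

open Filter Topology RealInnerProductSpace

section

variable {E : Type*} [NormedAddCommGroup E] [InnerProductSpace ℝ E]

/-- The direction from `c` to the nearest point `q` of the hull separates `c` from `S`. -/
theorem exists_inner_sub_pos_of_notMem_convexHull {S : Set E} (hS : S.Finite) {c : E}
    (hc : c ∉ convexHull ℝ S) : ∃ v : E, ∀ p ∈ S, 0 < ⟪v, p - c⟫ := by
  rcases S.eq_empty_or_nonempty with rfl | hne
  · exact ⟨0, by simp⟩
  obtain ⟨q, hq, hnearest⟩ := exists_norm_eq_iInf_of_complete_convex
    (hne.convexHull (𝕜 := ℝ)) (hS.isCompact_convexHull (𝕜 := ℝ)).isComplete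
    (convex_convexHull ℝ S) c
  have hobtuse := (norm_eq_iInf_iff_real_inner_le_zero (convex_convexHull ℝ S) hq).1 hnearest
  have hqc : 0 < ‖q - c‖ := norm_pos_iff.2 (sub_ne_zero.2 fun h => hc (h ▸ hq))
  refine ⟨q - c, fun p hp => ?_⟩
  have hp_obtuse := hobtuse p (subset_convexHull ℝ S hp)
  calc (0 : ℝ) < ‖q - c‖ ^ 2 - ⟪c - q, p - q⟫ := by nlinarith
    _ = ⟪q - c, p - c⟫ := by
        rw [← real_inner_self_eq_norm_sq, ← neg_sub q c, inner_neg_left, sub_neg_eq_add,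
          ← inner_add_right, sub_add_sub_cancel']

theorem eventually_norm_sub_smul_lt_norm {x v : E} (hx : 0 < ⟪v, x⟫) :
    ∀ᶠ t in 𝓝[>] (0 : ℝ), ‖x - t • v‖ < ‖x‖ := by
  have hsmall : ∀ᶠ t in 𝓝 (0 : ℝ), t * ‖v‖ ^ 2 < 2 * ⟪v, x⟫ :=
    (continuous_id.mul continuous_const).tendsto' 0 0 (by simp)
      |>.eventually (gt_mem_nhds (by linarith))
  filter_upwards [self_mem_nhdsWithin, nhdsWithin_le_nhds hsmall] with t (ht : 0 < t) hts
  refine lt_of_pow_lt_pow_left₀ 2 (norm_nonneg x) ?_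
  rw [norm_sub_sq_real, inner_smul_right, norm_smul, mul_pow, Real.norm_eq_abs, sq_abs,
    real_inner_comm]
  nlinarith

theorem eventually_norm_sub_smul_lt {x : E} {r : ℝ} (hx : ‖x‖ < r) (v : E) :
    ∀ᶠ t in 𝓝 (0 : ℝ), ‖x - t • v‖ < r :=
  (continuous_const.sub (continuous_id.smul continuous_const)).norm.tendsto' 0 ‖x‖ (by simp)
    |>.eventually (gt_mem_nhds hx)

theorem exists_forall_norm_sub_lt_of_inner_pos {P : Finset E} {c v : E} {r : ℝ}
    (henc : ∀ p ∈ P, ‖p - c‖ ≤ r) (hv : ∀ p ∈ P, ‖p - c‖ = r → 0 < ⟪v, p - c⟫) :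
    ∃ c', ∀ p ∈ P, ‖p - c'‖ < r := by
  suffices ∀ᶠ t in 𝓝[>] (0 : ℝ), ∀ p ∈ P, ‖p - c - t • v‖ < r by
    obtain ⟨t, ht⟩ := this.exists
    exact ⟨c + t • v, fun p hp => by simpa only [sub_add_eq_sub_sub] using ht p hp⟩
  refine (eventually_all_finset P).2 fun p hp => ?_
  rcases (henc p hp).eq_or_lt with hpr | hpr
  · exact hpr ▸ eventually_norm_sub_smul_lt_norm (hv p hp hpr)
  · exact nhdsWithin_le_nhds (eventually_norm_sub_smul_lt hpr v)

end

theorem Finset.exists_lt_forall_le_of_forall_lt {ι : Type*} {s : Finset ι} {f : ι → ℝ} {r : ℝ}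
    (h : ∀ i ∈ s, f i < r) : ∃ r' < r, ∀ i ∈ s, f i ≤ r' := by
  have : ∀ᶠ r' in 𝓝[<] r, ∀ i ∈ s, f i < r' :=
    (eventually_all_finset s).2 fun i hi => nhdsWithin_le_nhds (eventually_gt_nhds (h i hi))
  obtain ⟨r', hr', hlt⟩ := (this.and self_mem_nhdsWithin).exists
  exact ⟨r', hlt, fun i hi => (hr' i hi).le⟩

theorem center_mem_convexHull_support_general
    (P : Finset (EuclideanSpace ℝ (Fin 3)))
    (c : EuclideanSpace ℝ (Fin 3)) (r : ℝ)
    (henc : ∀ p ∈ P, ‖p - c‖ ≤ r)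
    (hmin : ∀ (c' : EuclideanSpace ℝ (Fin 3)) (r' : ℝ),
      (∀ p ∈ P, ‖p - c'‖ ≤ r') → r ≤ r') :
    c ∈ convexHull ℝ {p : EuclideanSpace ℝ (Fin 3) | p ∈ P ∧ ‖p - c‖ = r} := by
  by_contra hc
  obtain ⟨v, hv⟩ := exists_inner_sub_pos_of_notMem_convexHull
    (P.finite_toSet.subset fun _ hp => hp.1) hc
  obtain ⟨c', hc'⟩ := exists_forall_norm_sub_lt_of_inner_pos henc fun p hp hpr => hv p ⟨hp, hpr⟩
  obtain ⟨r', hr'r, hr'⟩ := P.exists_lt_forall_le_of_forall_lt hc'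
  exact (hmin c' r' hr').not_gt hr'r

/-- The center of the smallest enclosing ball lies in the convex
hull of the support points. -/
theorem center_mem_convexHull_support
    (P : Finset (EuclideanSpace ℝ (Fin 3))) (hP : P.Nonempty)
    (c : EuclideanSpace ℝ (Fin 3)) (r : ℝ)
    (henc : ∀ p ∈ P, ‖p - c‖ ≤ r)
    (hmin : ∀ (c' : EuclideanSpace ℝ (Fin 3)) (r' : ℝ),
      (∀ p ∈ P, ‖p - c'‖ ≤ r') → r ≤ r') :
    c ∈ convexHull ℝ {p : EuclideanSpace ℝ (Fin 3) | p ∈ P ∧ ‖p - c‖ = r} :=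
  center_mem_convexHull_support_general P c r henc hmin
end

section
/- Let P be a finite set of at least two points in ℝ³ and let (c, r) be its smallest enclosing ball (‖p − c‖ ≤ r for all p ∈ P, with r minimal). Then at least two points of P lie on the boundary sphere, i.e., the set {p ∈ P : ‖p − c‖ = r} has cardinality at least 2. -/
/-!
If at most one point `q` of `P` lies on the boundary sphere of an enclosing ball of radius `r > 0`,
all other points lie in a concentric ball of some radius `m < r`. Moving the centre towards `q` by
the fraction `t = (r - m) / (2r)` of the way brings `q` to distance `(1 - t) r` and moves every other
point by at most `t r`, so all of `P` fits in a ball of radius `(m + r) / 2 < r`.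
-/

open Metric AffineMap

namespace Finset

variable {V P : Type*}

theorem exists_nonneg_lt_forall_dist_le [PseudoMetricSpace P] (s : Finset P) {c : P} {r : ℝ}
    (hr : 0 < r) (hs : ∀ p ∈ s, dist p c < r) :
    ∃ m, 0 ≤ m ∧ m < r ∧ ∀ p ∈ s, dist p c ≤ m := by
  rcases s.eq_empty_or_nonempty with rfl | hne
  · exact ⟨0, le_rfl, hr, by simp⟩
  · obtain ⟨p₀, hp₀, hmax⟩ := s.exists_max_image (dist · c) hne
    exact ⟨dist p₀ c, dist_nonneg, hs p₀ hp₀, hmax⟩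

theorem pos_of_one_lt_card_of_subset_closedBall [MetricSpace P] {s : Finset P} {c : P} {r : ℝ}
    (hcard : 1 < s.card) (hs : (s : Set P) ⊆ closedBall c r) : 0 < r := by
  obtain ⟨a, ha, b, hb, hab⟩ := one_lt_card.1 hcard
  have hac : dist a c ≤ r := hs ha
  have hbc : dist b c ≤ r := hs hb
  linarith [dist_pos.2 hab, dist_triangle_right a b c]

theorem exists_closedBall_lt_of_forall_ne_dist_lt [SeminormedAddCommGroup V] [NormedSpace ℝ V]
    [PseudoMetricSpace P] [NormedAddTorsor V P] {s : Finset P} {c q : P} {r : ℝ} (hr : 0 < r)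
    (hq : dist q c ≤ r) (hs : ∀ p ∈ s, p ≠ q → dist p c < r) :
    ∃ c' r', r' < r ∧ (s : Set P) ⊆ closedBall c' r' := by
  classical
  obtain ⟨m, hm0, hmr, hm⟩ := (s.erase q).exists_nonneg_lt_forall_dist_le hr fun p hp =>
    hs p (mem_of_mem_erase hp) (ne_of_mem_erase hp)
  set t := (r - m) / (2 * r) with ht
  have ht0 : 0 ≤ t := div_nonneg (by linarith) (by linarith)
  have ht1 : t ≤ 1 := (div_le_one (by linarith)).2 (by linarith)
  have htr : t * r = (r - m) / 2 := by rw [ht]; field_simp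
  refine ⟨lineMap c q t, (m + r) / 2, by linarith, fun p hp => mem_closedBall.2 ?_⟩
  rcases eq_or_ne p q with rfl | hpq
  · calc dist p (lineMap c p t) = (1 - t) * dist p c := by
          rw [dist_comm, dist_lineMap_right, Real.norm_of_nonneg (by linarith), dist_comm]
      _ ≤ (1 - t) * r := by gcongr
      _ = (m + r) / 2 := by linarith
  · calc dist p (lineMap c q t) ≤ dist p c + dist c (lineMap c q t) := dist_triangle _ _ _
      _ = dist p c + t * dist q c := by
          rw [dist_left_lineMap, Real.norm_of_nonneg ht0, dist_comm c q]
      _ ≤ m + t * r := by gcongr; exact hm p (mem_erase.2 ⟨hpq, hp⟩)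
      _ = (m + r) / 2 := by linarith

end Finset

/-- At least two support points on the boundary of the smallest
enclosing ball of a set of at least two points. -/
theorem two_support_points
    (P : Finset (EuclideanSpace ℝ (Fin 3))) (hP : 2 ≤ P.card)
    (c : EuclideanSpace ℝ (Fin 3)) (r : ℝ)
    (henc : ∀ p ∈ P, ‖p - c‖ ≤ r)
    (hmin : ∀ (c' : EuclideanSpace ℝ (Fin 3)) (r' : ℝ),
      (∀ p ∈ P, ‖p - c'‖ ≤ r') → r ≤ r') :
    2 ≤ {p : EuclideanSpace ℝ (Fin 3) | p ∈ P ∧ ‖p - c‖ = r}.ncard := by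
  have hball : ↑P ⊆ closedBall c r := fun p hp => by simpa [dist_eq_norm] using henc p hp
  have hr : 0 < r := P.pos_of_one_lt_card_of_subset_closedBall hP hball
  by_contra! hlt
  have hsupp : {p | p ∈ P ∧ ‖p - c‖ = r}.Subsingleton := fun a ha b hb =>
    (Set.ncard_le_one_iff (Set.toFinite _)).1 (by omega) ha hb
  obtain ⟨q, hq, hstrict⟩ : ∃ q, dist q c ≤ r ∧ ∀ p ∈ P, p ≠ q → dist p c < r := by
    by_cases h : ∃ q ∈ P, ‖q - c‖ = r
    · obtain ⟨q, hqP, hqr⟩ := h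
      refine ⟨q, hball hqP, fun p hp hpq => (hball hp).lt_of_ne fun hpr => hpq ?_⟩
      exact hsupp ⟨hp, by rwa [← dist_eq_norm]⟩ ⟨hqP, hqr⟩
    · push Not at h
      exact ⟨c, by simpa using hr.le, fun p hp _ =>
        (hball hp).lt_of_ne (by simpa [dist_eq_norm] using h p hp)⟩
  obtain ⟨c', r', hr', hsub⟩ := P.exists_closedBall_lt_of_forall_ne_dist_lt hr hq hstrict
  exact hr'.not_ge (hmin c' r' fun p hp => by simpa [dist_eq_norm] using hsub hp)
end

section
/- The minimal enclosing sphere of a finite nonempty set P ⊂ ℝ³ can be determined by considering only the subset of points that lie on the sphere's boundary: if (c, r) is the smallest enclosing ball of P and S = {p ∈ P : ‖p − c‖ = r}, then (c, r) is also the smallest enclosing ball of S (S is enclosed by (c, r) and no ball of radius less than r encloses S). -/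
/-- The smallest enclosing ball of `P` is also the smallest
enclosing ball of its set of support points. -/
theorem seb_of_support_points
    (P : Finset (EuclideanSpace ℝ (Fin 3))) (hP : P.Nonempty)
    (c : EuclideanSpace ℝ (Fin 3)) (r : ℝ)
    (henc : ∀ p ∈ P, ‖p - c‖ ≤ r)
    (hmin : ∀ (c' : EuclideanSpace ℝ (Fin 3)) (r' : ℝ),
      (∀ p ∈ P, ‖p - c'‖ ≤ r') → r ≤ r') :
    (∀ p ∈ {p : EuclideanSpace ℝ (Fin 3) | p ∈ P ∧ ‖p - c‖ = r}, ‖p - c‖ ≤ r) ∧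
    (∀ (c' : EuclideanSpace ℝ (Fin 3)) (r' : ℝ),
      (∀ p ∈ {p : EuclideanSpace ℝ (Fin 3) | p ∈ P ∧ ‖p - c‖ = r}, ‖p - c'‖ ≤ r') →
      r ≤ r') := by
  classical
  constructor
  · rintro p ⟨hp, he⟩
    exact he.le
  · intro c' r' hS
    by_contra hlt
    push_neg at hlt
    -- the support set is nonempty
    have hSne : ∃ p ∈ P, ‖p - c‖ = r := by
      by_contra h
      push_neg at h
      have hub : ∀ p ∈ P, ‖p - c‖ ≤ P.sup' hP (fun p => ‖p - c‖) :=
        fun p hp => Finset.le_sup' (fun q => ‖q - c‖) hp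
      have h1 : r ≤ P.sup' hP (fun p => ‖p - c‖) := hmin _ _ hub
      obtain ⟨q, hq, hq2⟩ := Finset.exists_mem_eq_sup' hP (fun p => ‖p - c‖)
      have h2 : ‖q - c‖ < r := lt_of_le_of_ne (henc q hq) (h q hq)
      rw [hq2] at h1
      linarith
    obtain ⟨p₀, hp₀P, hp₀⟩ := hSne
    have hp₀' : ‖p₀ - c'‖ ≤ r' := hS p₀ ⟨hp₀P, hp₀⟩
    set d := ‖c' - c‖ with hdd
    by_cases hd : d = 0
    · have hcc : c' = c := by
        have := norm_sub_eq_zero_iff.mp hd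
        exact this
      rw [hcc] at hp₀'
      rw [hp₀] at hp₀'
      linarith
    · have hd0 : 0 < d := lt_of_le_of_ne (norm_nonneg _) (Ne.symm hd)
      by_cases hQ : (P.filter (fun p => ‖p - c‖ ≠ r)).Nonempty
      · set Q := P.filter (fun p => ‖p - c‖ ≠ r) with hQdef
        set δ := Q.inf' hQ (fun p => r - ‖p - c‖) with hδdef
        have hδ : 0 < δ := by
          rw [hδdef, Finset.lt_inf'_iff]
          intro p hp
          rw [hQdef, Finset.mem_filter] at hp
          have := lt_of_le_of_ne (henc p hp.1) hp.2
          linarith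
        set t := min 1 (δ / (2 * d)) with htdef
        have ht0 : 0 < t := lt_min one_pos (by positivity)
        have ht1 : t ≤ 1 := min_le_left _ _
        set c₂ := c + t • (c' - c) with hc₂
        have key : ∀ p ∈ P, ‖p - c₂‖ ≤ max ((1 - t) * r + t * r') (r - δ / 2) := by
          intro p hp
          by_cases hb : ‖p - c‖ = r
          · have h1 : ‖p - c'‖ ≤ r' := hS p ⟨hp, hb⟩
            have heq : p - c₂ = (1 - t) • (p - c) + t • (p - c') := by
              rw [hc₂]; module
            have hcalc : ‖p - c₂‖ ≤ (1 - t) * r + t * r' := by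
              calc ‖p - c₂‖ = ‖(1 - t) • (p - c) + t • (p - c')‖ := by rw [heq]
                _ ≤ ‖(1 - t) • (p - c)‖ + ‖t • (p - c')‖ := norm_add_le _ _
                _ = (1 - t) * ‖p - c‖ + t * ‖p - c'‖ := by
                    rw [norm_smul, norm_smul, Real.norm_of_nonneg (by linarith),
                      Real.norm_of_nonneg ht0.le]
                _ ≤ (1 - t) * r + t * r' := by
                    rw [hb]
                    have := mul_le_mul_of_nonneg_left h1 ht0.le
                    linarith
            exact le_trans hcalc (le_max_left _ _)
          · have hpQ : p ∈ Q := Finset.mem_filter.mpr ⟨hp, hb⟩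
            have hδle : δ ≤ r - ‖p - c‖ := Finset.inf'_le _ hpQ
            have htd : t * d ≤ δ / 2 := by
              have ht2 : t ≤ δ / (2 * d) := min_le_right _ _
              have := mul_le_mul_of_nonneg_right ht2 hd0.le
              calc t * d ≤ δ / (2 * d) * d := this
                _ = δ / 2 := by field_simp
            have heq : p - c₂ = (p - c) - t • (c' - c) := by
              rw [hc₂]; module
            have hcalc : ‖p - c₂‖ ≤ r - δ / 2 := by
              calc ‖p - c₂‖ = ‖(p - c) - t • (c' - c)‖ := by rw [heq]
                _ ≤ ‖p - c‖ + ‖t • (c' - c)‖ := norm_sub_le _ _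
                _ = ‖p - c‖ + t * d := by rw [norm_smul, Real.norm_of_nonneg ht0.le]
                _ ≤ (r - δ) + δ / 2 := by linarith
                _ ≤ r - δ / 2 := by linarith
            exact le_trans hcalc (le_max_right _ _)
        have hfin := hmin c₂ _ key
        have h1 : (1 - t) * r + t * r' < r := by nlinarith
        have h2 : r - δ / 2 < r := by linarith
        have := max_lt h1 h2
        linarith
      · -- all points are support points
        rw [Finset.not_nonempty_iff_eq_empty, Finset.filter_eq_empty_iff] at hQ
        have : ∀ p ∈ P, ‖p - c'‖ ≤ r' := by
          intro p hp
          have hb : ‖p - c‖ = r := by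
            have := hQ hp
            simpa using this
          exact hS p ⟨hp, hb⟩
        have := hmin c' r' this
        linarith
end

section
/- For any finite nonempty set P of points in ℝ³ with smallest enclosing ball (c, r), there exists a subset S ⊆ P with at most 4 elements whose smallest enclosing ball is also (c, r); i.e., in three-dimensional space the minimal enclosing sphere is determined by at most four points lying on its surface. -/
/-- The smallest enclosing ball in ℝ³ is determined by at most
four points of the set. -/
theorem seb_determined_by_four_points
    (P : Finset (EuclideanSpace ℝ (Fin 3))) (hP : P.Nonempty)
    (c : EuclideanSpace ℝ (Fin 3)) (r : ℝ)
    (henc : ∀ p ∈ P, ‖p - c‖ ≤ r)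
    (hmin : ∀ (c' : EuclideanSpace ℝ (Fin 3)) (r' : ℝ),
      (∀ p ∈ P, ‖p - c'‖ ≤ r') → r ≤ r') :
    ∃ S : Finset (EuclideanSpace ℝ (Fin 3)), S ⊆ P ∧ S.card ≤ 4 ∧
      (∀ p ∈ S, ‖p - c‖ ≤ r) ∧
      (∀ (c' : EuclideanSpace ℝ (Fin 3)) (r' : ℝ),
        (∀ p ∈ S, ‖p - c'‖ ≤ r') → r ≤ r') := by
  classical
  by_contra hcon
  push_neg at hcon
  -- every subset of cardinality ≤ 4 admits a strictly smaller enclosing ball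
  have key : ∀ S : Finset (EuclideanSpace ℝ (Fin 3)), S ⊆ P → S.card ≤ 4 →
      ∃ cr : (EuclideanSpace ℝ (Fin 3)) × ℝ, (∀ p ∈ S, ‖p - cr.1‖ ≤ cr.2) ∧ cr.2 < r := by
    intro S hSP hS4
    obtain ⟨c', r', h1, h2⟩ := hcon S hSP hS4 (fun p hp => henc p (hSP hp))
    exact ⟨(c', r'), h1, h2⟩
  -- choice function
  let g : Finset (EuclideanSpace ℝ (Fin 3)) → (EuclideanSpace ℝ (Fin 3)) × ℝ := fun S =>
    if h : S ⊆ P ∧ S.card ≤ 4 then Classical.choose (key S h.1 h.2) else (c, r)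
  have hg : ∀ S : Finset (EuclideanSpace ℝ (Fin 3)), S ⊆ P → S.card ≤ 4 →
      (∀ p ∈ S, ‖p - (g S).1‖ ≤ (g S).2) ∧ (g S).2 < r := by
    intro S h1 h2
    simp only [g, dif_pos (And.intro h1 h2)]
    exact Classical.choose_spec (key S h1 h2)
  -- the finite collection of small subsets
  let T : Finset (Finset (EuclideanSpace ℝ (Fin 3))) := P.powerset.filter (fun S => S.card ≤ 4)
  have hTmem : ∀ S : Finset (EuclideanSpace ℝ (Fin 3)), S ∈ T ↔ S ⊆ P ∧ S.card ≤ 4 := by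
    intro S
    simp [T, Finset.mem_filter, Finset.mem_powerset]
  have hTne : T.Nonempty := ⟨∅, (hTmem ∅).mpr ⟨Finset.empty_subset _, by simp⟩⟩
  obtain ⟨S₀, hS₀, hmax⟩ := Finset.exists_max_image T (fun S => (g S).2) hTne
  set r' : ℝ := (g S₀).2 with hr'
  have hr'lt : r' < r := by
    obtain ⟨h1, h2⟩ := (hTmem S₀).mp hS₀
    exact (hg S₀ h1 h2).2
  -- Helly's theorem on the closed balls of radius r' around points of P
  have hfin : Module.finrank ℝ (EuclideanSpace ℝ (Fin 3)) = 3 := finrank_euclideanSpace_fin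
  have hHelly : (⋂ p ∈ P, Metric.closedBall p r').Nonempty := by
    apply Convex.helly_theorem' (𝕜 := ℝ)
    · intro p _; exact convex_closedBall p r'
    · intro I hIP hIcard
      rw [hfin] at hIcard
      refine ⟨(g I).1, ?_⟩
      simp only [Set.mem_iInter, Metric.mem_closedBall]
      intro p hp
      have h1 := (hg I hIP hIcard).1 p hp
      have h2 : (g I).2 ≤ r' := hmax I ((hTmem I).mpr ⟨hIP, hIcard⟩)
      have := h1.trans h2
      rwa [dist_eq_norm, ← norm_neg, neg_sub]
  obtain ⟨c'', hc''⟩ := hHelly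
  simp only [Set.mem_iInter, Metric.mem_closedBall] at hc''
  have : r ≤ r' := by
    apply hmin c''
    intro p hp
    have := hc'' p hp
    rwa [dist_comm, dist_eq_norm] at this
  linarith
end

section
/- Let P be a finite nonempty set of points in ℝ³ with smallest enclosing ball (c, r), and let q ∈ ℝ³ be a point with ‖q − c‖ > r (q is outside the current sphere). Then q lies on the boundary of the smallest enclosing ball of P ∪ {q}: if (c', r') is the smallest enclosing ball of P ∪ {q}, then ‖q − c'‖ = r'. -/
/-- A point outside the current smallest enclosing ball lies on the
boundary of the smallest enclosing ball of the enlarged set. -/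
theorem new_point_on_boundary
    (P : Finset (EuclideanSpace ℝ (Fin 3))) (hP : P.Nonempty)
    (c : EuclideanSpace ℝ (Fin 3)) (r : ℝ)
    (henc : ∀ p ∈ P, ‖p - c‖ ≤ r)
    (hmin : ∀ (c' : EuclideanSpace ℝ (Fin 3)) (r' : ℝ),
      (∀ p ∈ P, ‖p - c'‖ ≤ r') → r ≤ r')
    (q : EuclideanSpace ℝ (Fin 3)) (hq : r < ‖q - c‖)
    (c' : EuclideanSpace ℝ (Fin 3)) (r' : ℝ)
    (henc' : ∀ p ∈ insert q (P : Set (EuclideanSpace ℝ (Fin 3))), ‖p - c'‖ ≤ r')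
    (hmin' : ∀ (c'' : EuclideanSpace ℝ (Fin 3)) (r'' : ℝ),
      (∀ p ∈ insert q (P : Set (EuclideanSpace ℝ (Fin 3))), ‖p - c''‖ ≤ r'') →
      r' ≤ r'') :
    ‖q - c'‖ = r' := by
  have hqc' : ‖q - c'‖ ≤ r' := henc' q (Set.mem_insert _ _)
  by_contra hne
  have hlt : ‖q - c'‖ < r' := lt_of_le_of_ne hqc' hne
  have hencP' : ∀ p ∈ P, ‖p - c'‖ ≤ r' := fun p hp =>
    henc' p (Set.mem_insert_of_mem _ hp)
  have hrr' : r ≤ r' := hmin c' r' hencP'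
  obtain ⟨p0, hp0⟩ := hP
  have hr0 : 0 ≤ r := le_trans (norm_nonneg _) (henc p0 hp0)
  rcases lt_or_eq_of_le hrr' with h | h
  · -- r < r' : shrink the ball by moving the center toward c
    set d := ‖c - c'‖ with hd
    have hd0 : 0 ≤ d := norm_nonneg _
    set δ := r' - ‖q - c'‖ with hδdef
    have hδ : 0 < δ := by simp [hδdef]; linarith
    set t : ℝ := min (δ / (2 * (d + 1))) 1 with ht
    have ht0 : 0 < t := lt_min (by positivity) one_pos
    have ht1 : t ≤ 1 := min_le_right _ _
    have htd : t * d ≤ δ / 2 := by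
      have h1 : t ≤ δ / (2 * (d + 1)) := min_le_left _ _
      have : t * d ≤ (δ / (2 * (d + 1))) * d := by
        apply mul_le_mul_of_nonneg_right h1 hd0
      calc t * d ≤ (δ / (2 * (d + 1))) * d := this
        _ ≤ δ / 2 := by
          rw [div_mul_eq_mul_div, div_le_div_iff₀ (by positivity) (by norm_num)]
          nlinarith
    set c'' : EuclideanSpace ℝ (Fin 3) := c' + t • (c - c') with hc''
    have hq'' : ‖q - c''‖ ≤ ‖q - c'‖ + t * d := by
      have heq : q - c'' = (q - c') - t • (c - c') := by
        rw [hc'']; module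
      rw [heq]
      calc ‖(q - c') - t • (c - c')‖ ≤ ‖q - c'‖ + ‖t • (c - c')‖ := norm_sub_le _ _
        _ = ‖q - c'‖ + t * d := by
          rw [norm_smul, Real.norm_eq_abs, abs_of_pos ht0]
    have hP'' : ∀ p ∈ P, ‖p - c''‖ ≤ (1 - t) * r' + t * r := by
      intro p hp
      have heq : p - c'' = (1 - t) • (p - c') + t • (p - c) := by
        rw [hc'']; module
      rw [heq]
      calc ‖(1 - t) • (p - c') + t • (p - c)‖
          ≤ ‖(1 - t) • (p - c')‖ + ‖t • (p - c)‖ := norm_add_le _ _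
        _ = (1 - t) * ‖p - c'‖ + t * ‖p - c‖ := by
            rw [norm_smul, norm_smul, Real.norm_eq_abs, Real.norm_eq_abs,
              abs_of_nonneg (by linarith : (0:ℝ) ≤ 1 - t), abs_of_pos ht0]
        _ ≤ (1 - t) * r' + t * r := by
            have := hencP' p hp
            have := henc p hp
            nlinarith
    set R : ℝ := max (‖q - c'‖ + t * d) ((1 - t) * r' + t * r) with hR
    have hencR : ∀ p ∈ insert q (P : Set (EuclideanSpace ℝ (Fin 3))), ‖p - c''‖ ≤ R := by
      intro p hp
      rcases hp with rfl | hp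
      · exact le_trans hq'' (le_max_left _ _)
      · exact le_trans (hP'' p hp) (le_max_right _ _)
    have hR' := hmin' c'' R hencR
    have h1 : ‖q - c'‖ + t * d < r' := by linarith
    have h2 : (1 - t) * r' + t * r < r' := by nlinarith
    have : R < r' := max_lt h1 h2
    linarith
  · -- r = r'
    by_cases hcc : c = c'
    · rw [hcc] at hq; linarith
    · -- midpoint argument: the midpoint gives a strictly smaller enclosing ball for P
      set m : EuclideanSpace ℝ (Fin 3) := (2⁻¹ : ℝ) • (c + c') with hm
      set d := ‖c' - c‖ with hd
      have hd0 : 0 < d := by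
        rw [hd, norm_pos_iff, sub_ne_zero]
        exact fun hh => hcc hh.symm
      have key : ∀ p ∈ P, ‖p - m‖ ^ 2 ≤ r ^ 2 - d ^ 2 / 4 := by
        intro p hp
        have heq : p - m = (2⁻¹ : ℝ) • ((p - c) + (p - c')) := by
          rw [hm]; module
        have hpar := parallelogram_law_with_norm ℝ (p - c) (p - c')
        have hsub : (p - c) - (p - c') = c' - c := by abel
        rw [hsub] at hpar
        have h1 : ‖p - c‖ ≤ r := henc p hp
        have h2 : ‖p - c'‖ ≤ r := by have := hencP' p hp; linarith
        have hn1 : 0 ≤ ‖p - c‖ := norm_nonneg _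
        have hn2 : 0 ≤ ‖p - c'‖ := norm_nonneg _
        rw [heq, norm_smul, Real.norm_eq_abs]
        have : |((2:ℝ)⁻¹)| = 2⁻¹ := by norm_num
        rw [this]
        nlinarith [norm_nonneg ((p - c) + (p - c'))]
      have harg : 0 ≤ r ^ 2 - d ^ 2 / 4 := le_trans (by positivity) (key p0 hp0)
      set R2 := Real.sqrt (r ^ 2 - d ^ 2 / 4) with hR2
      have hencm : ∀ p ∈ P, ‖p - m‖ ≤ R2 := by
        intro p hp
        rw [hR2]
        have := key p hp
        nlinarith [Real.sq_sqrt harg, Real.sqrt_nonneg (r ^ 2 - d ^ 2 / 4),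
          norm_nonneg (p - m)]
      have hle := hmin m R2 hencm
      have hR2sq : R2 ^ 2 = r ^ 2 - d ^ 2 / 4 := Real.sq_sqrt harg
      nlinarith [Real.sqrt_nonneg (r ^ 2 - d ^ 2 / 4)]
end

section
/- Removing a strictly interior point does not change the smallest enclosing ball: if P ⊂ ℝ³ is finite with smallest enclosing ball (c, r) and q ∈ P satisfies ‖q − c‖ < r, then (c, r) is also the smallest enclosing ball of P \ {q}. -/
/-! If a ball `(c', r')` encloses `P \ {q}`, shift `(c, r)` slightly towards it: for small `s > 0`
the pair `((1 - s) • c + s • c', (1 - s) * r + s * r')` still encloses the interior point `q` (by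
continuity) and every other point of `P` (by convexity of the norm), so minimality of `r` gives
`r ≤ (1 - s) * r + s * r'`, that is `r ≤ r'`. -/

open Filter Topology

section EnclosingBall

variable {E : Type*} [SeminormedAddCommGroup E] [NormedSpace ℝ E]

lemma norm_sub_convexComb_le (p c c' : E) {s : ℝ} (hs₀ : 0 ≤ s) (hs₁ : s ≤ 1) :
    ‖p - ((1 - s) • c + s • c')‖ ≤ (1 - s) * ‖p - c‖ + s * ‖p - c'‖ := by
  have hsplit : p - ((1 - s) • c + s • c') = (1 - s) • (p - c) + s • (p - c') := by
    simp only [smul_sub, sub_smul, one_smul]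
    abel
  calc ‖p - ((1 - s) • c + s • c')‖
      ≤ ‖(1 - s) • (p - c)‖ + ‖s • (p - c')‖ := hsplit ▸ norm_add_le _ _
    _ = (1 - s) * ‖p - c‖ + s * ‖p - c'‖ := by
      rw [norm_smul_of_nonneg (sub_nonneg.mpr hs₁), norm_smul_of_nonneg hs₀]

lemma exists_convexComb_norm_sub_lt {q c : E} {r : ℝ} (hq : ‖q - c‖ < r) (c' : E) (r' : ℝ) :
    ∃ s ∈ Set.Ioo (0 : ℝ) 1, ‖q - ((1 - s) • c + s • c')‖ < (1 - s) * r + s * r' := by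
  have hnear : ∀ᶠ s in 𝓝 (0 : ℝ), ‖q - ((1 - s) • c + s • c')‖ < (1 - s) * r + s * r' :=
    ContinuousAt.eventually_lt (by fun_prop) (by fun_prop) (by simpa using hq)
  obtain ⟨s, hlt, hs⟩ :=
    ((hnear.filter_mono nhdsWithin_le_nhds).and (Ioo_mem_nhdsGT one_pos)).exists
  exact ⟨s, hs, hlt⟩

lemma le_of_forall_mem_diff_singleton_norm_sub_le {S : Set E} {c c' q : E} {r r' : ℝ}
    (henc : ∀ p ∈ S, ‖p - c‖ ≤ r)
    (hmin : ∀ (c'' : E) (r'' : ℝ), (∀ p ∈ S, ‖p - c''‖ ≤ r'') → r ≤ r'')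
    (hq : ‖q - c‖ < r) (henc' : ∀ p ∈ S \ {q}, ‖p - c'‖ ≤ r') : r ≤ r' := by
  obtain ⟨s, ⟨hs₀, hs₁⟩, hqs⟩ := exists_convexComb_norm_sub_lt hq c' r'
  have hmix : ∀ p ∈ S, ‖p - ((1 - s) • c + s • c')‖ ≤ (1 - s) * r + s * r' := by
    intro p hp
    rcases eq_or_ne p q with rfl | hpq
    · exact hqs.le
    calc ‖p - ((1 - s) • c + s • c')‖ ≤ (1 - s) * ‖p - c‖ + s * ‖p - c'‖ :=
          norm_sub_convexComb_le p c c' hs₀.le hs₁.le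
      _ ≤ (1 - s) * r + s * r' := by
          gcongr
          exacts [henc p hp, henc' p ⟨hp, hpq⟩]
  have hr := hmin _ _ hmix
  exact le_of_mul_le_mul_left (by linarith) hs₀

end EnclosingBall

theorem erase_interior_point_general
    (P : Finset (EuclideanSpace ℝ (Fin 3)))
    (c : EuclideanSpace ℝ (Fin 3)) (r : ℝ)
    (henc : ∀ p ∈ P, ‖p - c‖ ≤ r)
    (hmin : ∀ (c' : EuclideanSpace ℝ (Fin 3)) (r' : ℝ),
      (∀ p ∈ P, ‖p - c'‖ ≤ r') → r ≤ r')
    (q : EuclideanSpace ℝ (Fin 3)) (hq : ‖q - c‖ < r) :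
    (∀ p ∈ (P : Set (EuclideanSpace ℝ (Fin 3))) \ {q}, ‖p - c‖ ≤ r) ∧
    (∀ (c' : EuclideanSpace ℝ (Fin 3)) (r' : ℝ),
      (∀ p ∈ (P : Set (EuclideanSpace ℝ (Fin 3))) \ {q}, ‖p - c'‖ ≤ r') →
      r ≤ r') :=
  ⟨fun p hp => henc p hp.1, fun _ _ henc' =>
    le_of_forall_mem_diff_singleton_norm_sub_le henc hmin hq henc'⟩

/-- Removing a strictly interior point does not change the
smallest enclosing ball. -/
theorem erase_interior_point
    (P : Finset (EuclideanSpace ℝ (Fin 3)))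
    (c : EuclideanSpace ℝ (Fin 3)) (r : ℝ)
    (henc : ∀ p ∈ P, ‖p - c‖ ≤ r)
    (hmin : ∀ (c' : EuclideanSpace ℝ (Fin 3)) (r' : ℝ),
      (∀ p ∈ P, ‖p - c'‖ ≤ r') → r ≤ r')
    (q : EuclideanSpace ℝ (Fin 3)) (hqP : q ∈ P) (hq : ‖q - c‖ < r) :
    (∀ p ∈ (P : Set (EuclideanSpace ℝ (Fin 3))) \ {q}, ‖p - c‖ ≤ r) ∧
    (∀ (c' : EuclideanSpace ℝ (Fin 3)) (r' : ℝ),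
      (∀ p ∈ (P : Set (EuclideanSpace ℝ (Fin 3))) \ {q}, ‖p - c'‖ ≤ r') →
      r ≤ r') :=
  erase_interior_point_general P c r henc hmin q hq
end

section
/- If the real parameters w and φ satisfy 0 < w < 1 and 0 < φ < 2·(1 + w), then every complex root λ of the polynomial λ² − (1 + w − φ)·λ + w satisfies |λ| < 1; hence under these parameter conditions the deterministic PSO iteration matrix is a contraction (spectral radius less than 1). -/
/-!
By the Schur–Cohn (Jury) test, a real monic quadratic `z ^ 2 - b z + c` has both roots in the
open unit disk as soon as `c < 1` and `|b| < 1 + c`. A real root `x ≥ 1` is impossible because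
`x ^ 2 - b x + c > x ^ 2 - (1 + c) x + c = (x - 1) (x - c) ≥ 0`, and `x ≤ -1` is the mirror case.
A non-real root `z` has real part `b / 2` (imaginary part of the equation), and then the real
part of the equation gives `‖z‖ ^ 2 = c`.
-/

theorem lt_one_of_quadratic_root {b c x : ℝ} (hx : x ^ 2 - b * x + c = 0) (hc : c < 1)
    (hb : b < 1 + c) : x < 1 := by
  by_contra! h
  have : 0 ≤ (x - 1) * (x - c) := mul_nonneg (by linarith) (by linarith)
  nlinarith

theorem abs_lt_one_of_quadratic_root {b c x : ℝ} (hx : x ^ 2 - b * x + c = 0) (hc : c < 1)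
    (hb : |b| < 1 + c) : |x| < 1 := by
  obtain ⟨hb₁, hb₂⟩ := abs_lt.mp hb
  have hneg : -x < 1 :=
    lt_one_of_quadratic_root (b := -b) (by linear_combination hx) hc (by linarith)
  exact abs_lt.mpr ⟨neg_lt.mp hneg, lt_one_of_quadratic_root hx hc hb₂⟩

theorem Complex.normSq_eq_of_quadratic_root {b c : ℝ} {z : ℂ}
    (hz : z ^ 2 - b * z + c = 0) (him : z.im ≠ 0) : Complex.normSq z = c := by
  have hre := congrArg Complex.re hz
  have him' := congrArg Complex.im hz
  simp only [sq, Complex.sub_re, Complex.add_re, Complex.mul_re, Complex.ofReal_re,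
    Complex.ofReal_im, Complex.sub_im, Complex.add_im, Complex.mul_im, Complex.zero_re,
    Complex.zero_im] at hre him'
  have hfactor : z.im * (2 * z.re - b) = 0 := by linear_combination him'
  have hsum : 2 * z.re = b := by linarith [(mul_eq_zero.mp hfactor).resolve_left him]
  rw [Complex.normSq_apply]
  linear_combination -hre + z.re * hsum

theorem Complex.norm_lt_one_of_quadratic_root {b c : ℝ} (hc : c < 1) (hb : |b| < 1 + c) {z : ℂ}
    (hz : z ^ 2 - b * z + c = 0) : ‖z‖ < 1 := by
  by_cases him : z.im = 0
  · have hz_real : z = z.re := Complex.ext rfl (by simpa using him)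
    rw [hz_real] at hz ⊢
    rw [Complex.norm_real, Real.norm_eq_abs]
    exact abs_lt_one_of_quadratic_root (by exact_mod_cast hz) hc hb
  · rw [← sq_lt_one_iff₀ (norm_nonneg z), Complex.sq_norm,
      Complex.normSq_eq_of_quadratic_root hz him]
    exact hc

theorem pso_roots_in_unit_disk_general
    (w φ : ℝ) (hw1 : w < 1)
    (hφ0 : 0 < φ) (hφ2 : φ < 2 * (1 + w)) :
    ∀ z : ℂ,
      z ^ 2 - ((1 + w - φ : ℝ) : ℂ) * z + (w : ℂ) = 0 → ‖z‖ < 1 := fun _ hz =>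
  Complex.norm_lt_one_of_quadratic_root hw1 (abs_lt.mpr ⟨by linarith, by linarith⟩) hz

/-- Under `0 < w < 1` and `0 < φ < 2(1+w)` every root of the PSO
characteristic polynomial lies strictly inside the unit disk. -/
theorem pso_roots_in_unit_disk
    (w φ : ℝ) (hw0 : 0 < w) (hw1 : w < 1)
    (hφ0 : 0 < φ) (hφ2 : φ < 2 * (1 + w)) :
    ∀ z : ℂ,
      z ^ 2 - ((1 + w - φ : ℝ) : ℂ) * z + (w : ℂ) = 0 → ‖z‖ < 1 :=
  pso_roots_in_unit_disk_general w φ hw1 hφ0 hφ2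
end

section
/- Convergence of the deterministic PSO recurrence: let w, φ ∈ ℝ satisfy 0 < w < 1 and 0 < φ < 2·(1 + w), let p ∈ ℝ, and let (x(t)) be any real sequence satisfying the second-order recurrence x(t+2) = (1 + w − φ)·x(t+1) − w·x(t) + φ·p for all t. Then x(t) converges to p as t → ∞. -/
/-!
Shifting to `y = x - p` gives the homogeneous recurrence `y(t+2) = a y(t+1) - w y(t)` with
`a = 1 + w - φ`. The hypotheses are exactly the Schur–Cohn conditions `|w| < 1`, `|a| < 1 + w`
for the characteristic polynomial `λ² - aλ + w`, so both of its complex roots `λ₁, λ₂` lie in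
the open unit disk. Then `z(t) = y(t+1) - λ₂ y(t)` is the geometric sequence `λ₁ᵗ z(0)`, and
`y(t+1) = λ₂ y(t) + z(t)` forces `‖y(t)‖ ≤ (A + B t) rᵗ` with `r = max ‖λ₁‖ ‖λ₂‖ < 1`.
-/

open Filter Topology ComplexConjugate

lemma exists_real_roots_abs_lt_one {a b : ℝ} (hb : b < 1) (ha : |a| < 1 + b)
    (hdisc : 4 * b ≤ a ^ 2) :
    ∃ l₁ l₂ : ℝ, l₁ + l₂ = a ∧ l₁ * l₂ = b ∧ |l₁| < 1 ∧ |l₂| < 1 := by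
  set d := √(a ^ 2 - 4 * b)
  have hd : d ^ 2 = a ^ 2 - 4 * b := Real.sq_sqrt (by linarith)
  -- squaring turns `d < 2 - |a|` into `|a| < 1 + b`
  have hd_lt : d < 2 - |a| := by
    rw [Real.sqrt_lt' (by linarith)]
    nlinarith [sq_abs a]
  refine ⟨(a + d) / 2, (a - d) / 2, by ring, by linear_combination -hd / 4, ?_, ?_⟩ <;>
    rw [abs_lt] <;> constructor <;>
    linarith [le_abs_self a, neg_abs_le a, Real.sqrt_nonneg (a ^ 2 - 4 * b)]

lemma exists_conj_roots_norm_lt_one {a b : ℝ} (hb : b < 1) (hdisc : a ^ 2 < 4 * b) :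
    ∃ l : ℂ, l + conj l = a ∧ l * conj l = b ∧ ‖l‖ < 1 := by
  set d := √(4 * b - a ^ 2)
  have hd : d ^ 2 = 4 * b - a ^ 2 := Real.sq_sqrt (by linarith)
  have hnormSq : Complex.normSq ⟨a / 2, d / 2⟩ = b := by
    rw [Complex.normSq_mk]; linear_combination hd / 4
  refine ⟨⟨a / 2, d / 2⟩, ?_, ?_, ?_⟩
  · rw [Complex.add_conj]; push_cast; ring
  · rw [Complex.mul_conj, hnormSq]
  · rw [← sq_lt_one_iff₀ (norm_nonneg _), Complex.sq_norm, hnormSq]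
    exact hb

lemma exists_roots_norm_lt_one_of_abs_lt {a b : ℝ} (hb : |b| < 1) (ha : |a| < 1 + b) :
    ∃ l₁ l₂ : ℂ, l₁ + l₂ = a ∧ l₁ * l₂ = b ∧ ‖l₁‖ < 1 ∧ ‖l₂‖ < 1 := by
  have hb1 := (abs_lt.1 hb).2
  rcases le_or_gt (4 * b) (a ^ 2) with hdisc | hdisc
  · obtain ⟨l₁, l₂, hsum, hprod, h₁, h₂⟩ := exists_real_roots_abs_lt_one hb1 ha hdisc
    refine ⟨l₁, l₂, by exact_mod_cast hsum, by exact_mod_cast hprod, ?_, ?_⟩ <;>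
      rwa [Complex.norm_real, Real.norm_eq_abs]
  · obtain ⟨l, hsum, hprod, hl⟩ := exists_conj_roots_norm_lt_one hb1 hdisc
    exact ⟨l, conj l, hsum, hprod, hl, by rwa [Complex.norm_conj]⟩

lemma le_mul_pow_of_le_mul_add_pow {r c : ℝ} (hr : 0 ≤ r) {u : ℕ → ℝ}
    (hu : ∀ t, u (t + 1) ≤ r * u t + c * r ^ (t + 1)) (t : ℕ) :
    u t ≤ (u 0 + c * t) * r ^ t := by
  induction t with
  | zero => simp
  | succ t ih =>
    calc u (t + 1) ≤ r * ((u 0 + c * t) * r ^ t) + c * r ^ (t + 1) :=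
          (hu t).trans (by gcongr)
      _ = (u 0 + c * ↑(t + 1)) * r ^ (t + 1) := by push_cast; ring

lemma tendsto_add_mul_self_mul_pow_of_lt_one {r : ℝ} (hr : 0 ≤ r) (hr1 : r < 1) (a c : ℝ) :
    Tendsto (fun t : ℕ ↦ (a + c * t) * r ^ t) atTop (𝓝 0) := by
  have h := ((tendsto_pow_atTop_nhds_zero_of_lt_one hr hr1).const_mul a).add
    ((tendsto_self_mul_const_pow_of_lt_one hr hr1).const_mul c)
  simp only [mul_zero, add_zero] at h
  refine h.congr fun t ↦ ?_
  ring

theorem tendsto_zero_of_recurrence_of_norm_roots_lt_one {𝕜 E : Type*} [NormedField 𝕜]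
    [NormedAddCommGroup E] [NormedSpace 𝕜 E] {l₁ l₂ : 𝕜} (h₁ : ‖l₁‖ < 1) (h₂ : ‖l₂‖ < 1)
    {y : ℕ → E} (hy : ∀ t, y (t + 2) = (l₁ + l₂) • y (t + 1) - (l₁ * l₂) • y t) :
    Tendsto y atTop (𝓝 0) := by
  set z : ℕ → E := fun t ↦ y (t + 1) - l₂ • y t
  have hz : ∀ t, z t = l₁ ^ t • z 0 := by
    intro t
    induction t with
    | zero => simp
    | succ t ih =>
      calc z (t + 1) = l₁ • z t := by simp only [z, hy]; module
        _ = l₁ ^ (t + 1) • z 0 := by rw [ih, smul_smul, pow_succ']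
  set r := max ‖l₁‖ ‖l₂‖
  have hr : 0 ≤ r := (norm_nonneg _).trans (le_max_left _ _)
  have hstep : ∀ t, ‖y (t + 2)‖ ≤ r * ‖y (t + 1)‖ + ‖z 0‖ * r ^ (t + 1) := by
    intro t
    have hsplit : y (t + 2) = l₂ • y (t + 1) + z (t + 1) := by simp only [z]; abel
    calc ‖y (t + 2)‖ ≤ ‖l₂‖ * ‖y (t + 1)‖ + ‖l₁‖ ^ (t + 1) * ‖z 0‖ := by
          rw [hsplit, hz, ← norm_pow, ← norm_smul, ← norm_smul]
          exact norm_add_le _ _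
      _ ≤ r * ‖y (t + 1)‖ + ‖z 0‖ * r ^ (t + 1) := by
          rw [mul_comm (_ ^ _)]
          gcongr
          exacts [le_max_right _ _, le_max_left _ _]
  rw [← tendsto_add_atTop_iff_nat 1, tendsto_zero_iff_norm_tendsto_zero]
  exact squeeze_zero (fun _ ↦ norm_nonneg _)
    (le_mul_pow_of_le_mul_add_pow (u := fun t ↦ ‖y (t + 1)‖) hr hstep)
    (tendsto_add_mul_self_mul_pow_of_lt_one hr (max_lt h₁ h₂) _ _)

/-- Convergence of the deterministic PSO recurrence to the
attractor. -/
theorem pso_recurrence_tendsto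
    (w φ p : ℝ) (hw0 : 0 < w) (hw1 : w < 1)
    (hφ0 : 0 < φ) (hφ2 : φ < 2 * (1 + w))
    (x : ℕ → ℝ)
    (hrec : ∀ t : ℕ,
      x (t + 2) = (1 + w - φ) * x (t + 1) - w * x t + φ * p) :
    Tendsto x atTop (nhds p) := by
  obtain ⟨l₁, l₂, hsum, hprod, h₁, h₂⟩ := exists_roots_norm_lt_one_of_abs_lt
    (abs_lt.2 ⟨by linarith, hw1⟩) (abs_lt.2 ⟨by linarith, by linarith⟩ : |1 + w - φ| < 1 + w)
  set y : ℕ → ℂ := fun t ↦ ((x t - p : ℝ) : ℂ)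
  have hy : ∀ t, y (t + 2) = (l₁ + l₂) • y (t + 1) - (l₁ * l₂) • y t := by
    intro t
    simp only [y, hsum, hprod, hrec, smul_eq_mul]
    push_cast
    ring
  have hlim := (Complex.continuous_re.tendsto 0).comp
    (tendsto_zero_of_recurrence_of_norm_roots_lt_one h₁ h₂ hy)
  simpa [y, Function.comp_def] using hlim.add_const p
end
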